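/- The quotient group ℓ^∞(ℤ,ℤ)_S = ℓ^∞(ℤ,ℤ)/{ a − Sa : a ∈ ℓ^∞(ℤ,ℤ) } is divisible, torsion-free (hence a rational vector space), and uncountable. -/

import Mathlib

noncomputable section

/-- `ℓ∞(ℤ,ℤ)`: the additive group of bounded `ℤ`-valued functions on `ℤ`. -/
def bddZ : AddSubgroup (ℤ → ℤ) where
  carrier := {a | ∃ C : ℤ, ∀ k, |a k| ≤ C}
  add_mem' := by
    rintro a b ⟨C, hC⟩ ⟨D, hD⟩
    exact ⟨C + D, fun k => (abs_add_le _ _).trans (add_le_add (hC k) (hD k))⟩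
  zero_mem' := ⟨0, fun k => by simp⟩
  neg_mem' := by
    rintro a ⟨C, hC⟩
    exact ⟨C, fun k => by simpa using hC k⟩

/-- The shift `(Sa)(k) = a(k-1)` on `ℓ∞(ℤ,ℤ)`. -/
def shiftHom : bddZ →+ bddZ where
  toFun a := ⟨fun k => a.val (k - 1), by
    obtain ⟨C, hC⟩ := a.2
    exact ⟨C, fun k => hC (k - 1)⟩⟩
  map_zero' := rfl
  map_add' := fun a b => rfl

/-- The coinvariants `ℓ∞(ℤ,ℤ)_S = ℓ∞(ℤ,ℤ)/{a - Sa : a ∈ ℓ∞(ℤ,ℤ)}`, the quotient of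
`ℓ∞(ℤ,ℤ)` by the image of the homomorphism `1 - S`. -/
abbrev bddZCoinv := bddZ ⧸ (AddMonoidHom.id bddZ - shiftHom).range

/-! Every `b ∈ ℓ∞(ℤ,ℤ)` is the difference sequence `bdiff f` of some `f : ℤ → ℤ`, and `b` lies
in the image of `1 - S` exactly when `f` is bounded, since two functions with the same differences
differ by a constant. So `ℓ∞(ℤ,ℤ)_S` is the group of functions with bounded increments modulo the
bounded ones. There, `f = n ⌊f / n⌋ + (f mod n)` gives divisibility, boundedness of `n f` forces
boundedness of `f`, and the functions `k ↦ ⌊k α⌋` for `α ∈ ℝ` are pairwise at unbounded distance. -/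

def bdiff : (ℤ → ℤ) →+ (ℤ → ℤ) where
  toFun f k := f k - f (k - 1)
  map_zero' := rfl
  map_add' f g := by ext k; simp only [Pi.add_apply]; ring

@[simp]
lemma bdiff_apply (f : ℤ → ℤ) (k : ℤ) : bdiff f k = f k - f (k - 1) := rfl

lemma apply_eq_apply_zero_of_bdiff_eq_zero {f : ℤ → ℤ} (h : bdiff f = 0) (m : ℤ) :
    f m = f 0 := by
  have step (k : ℤ) : f k = f (k - 1) := sub_eq_zero.mp (congrFun h k)
  induction m using Int.induction_on with
  | zero => rfl
  | succ i ih => rw [step, add_sub_cancel_right, ih]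
  | pred i ih => rw [← ih, step (-i)]

lemma bdiff_surjective : Function.Surjective bdiff := by
  intro b
  refine ⟨fun m => ∑ k ∈ Finset.Ioc 0 m, b k - ∑ k ∈ Finset.Ioc m 0, b k, funext fun m => ?_⟩
  rcases le_or_gt m 0 with hm | hm
  · have h : Finset.Ioc (m - 1) 0 = insert m (Finset.Ioc m 0) := by
      ext k; simp only [Finset.mem_Ioc, Finset.mem_insert]; omega
    rw [bdiff_apply, h, Finset.sum_insert (by simp), Finset.Ioc_eq_empty_of_le hm,
      Finset.Ioc_eq_empty_of_le (by omega : m - 1 ≤ 0)]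
    simp
  · have h : Finset.Ioc 0 m = insert m (Finset.Ioc 0 (m - 1)) := by
      ext k; simp only [Finset.mem_Ioc, Finset.mem_insert]; omega
    rw [bdiff_apply, h, Finset.sum_insert (by simp), Finset.Ioc_eq_empty_of_le hm.le,
      Finset.Ioc_eq_empty_of_le (by omega : 0 ≤ m - 1)]
    simp

lemma bdiff_mem_bddZ {f : ℤ → ℤ} (hf : f ∈ bddZ) : bdiff f ∈ bddZ :=
  ((AddMonoidHom.id bddZ - shiftHom) ⟨f, hf⟩).2

lemma mem_bddZ_of_nsmul_mem {n : ℕ} (hn : n ≠ 0) {f : ℤ → ℤ} (h : n • f ∈ bddZ) :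
    f ∈ bddZ := by
  obtain ⟨C, hC⟩ := h
  refine ⟨C, fun k => le_trans ?_ (hC k)⟩
  rw [Pi.smul_apply, nsmul_eq_mul, abs_mul, Nat.abs_cast]
  exact le_mul_of_one_le_left (abs_nonneg _) (by exact_mod_cast Nat.one_le_iff_ne_zero.2 hn)

lemma const_mem_bddZ (c : ℤ) : (fun _ => c) ∈ bddZ := ⟨|c|, fun _ => le_rfl⟩

lemma mem_range_sub_shiftHom_iff {b : bddZ} {f : ℤ → ℤ} (hf : bdiff f = b) :
    b ∈ (AddMonoidHom.id bddZ - shiftHom).range ↔ f ∈ bddZ := by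
  refine ⟨?_, fun h => ⟨⟨f, h⟩, Subtype.ext hf⟩⟩
  rintro ⟨a, rfl⟩
  have hfa : bdiff (f - a) = 0 := by rw [map_sub, hf]; exact sub_self _
  have hf_eq : f = (a : ℤ → ℤ) + fun _ => f 0 - (a : ℤ → ℤ) 0 := funext fun m => by
    have := apply_eq_apply_zero_of_bdiff_eq_zero hfa m
    simp only [Pi.sub_apply, Pi.add_apply] at this ⊢
    linarith
  rw [hf_eq]
  exact add_mem a.2 (const_mem_bddZ _)

lemma abs_floor_sub_floor_sub_sub_lt_one (x y : ℝ) : |(⌊x⌋ - ⌊y⌋ : ℝ) - (x - y)| < 1 := by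
  rw [abs_sub_lt_iff]
  constructor <;> linarith [Int.floor_le x, Int.floor_le y, Int.lt_floor_add_one x,
    Int.lt_floor_add_one y]

lemma bdiff_floor_mul_mem_bddZ (α : ℝ) : bdiff (fun k : ℤ => ⌊k * α⌋) ∈ bddZ := by
  refine ⟨⌈|α|⌉ + 1, fun k => ?_⟩
  have h := abs_floor_sub_floor_sub_sub_lt_one (k * α) ((k - 1 : ℤ) * α)
  rw [show (k : ℝ) * α - ((k - 1 : ℤ) : ℝ) * α = α by push_cast; ring] at h
  have : ((|bdiff (fun k : ℤ => ⌊k * α⌋) k| : ℤ) : ℝ) < ⌈|α|⌉ + 1 := by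
    rw [bdiff_apply, Int.cast_abs, Int.cast_sub]
    linarith [abs_sub_abs_le_abs_sub ((⌊k * α⌋ : ℝ) - ⌊((k - 1 : ℤ) : ℝ) * α⌋) α, Int.le_ceil |α|]
  exact_mod_cast this.le

lemma eq_of_floor_mul_sub_floor_mul_mem_bddZ {α β : ℝ}
    (h : (fun k : ℤ => ⌊k * α⌋ - ⌊k * β⌋) ∈ bddZ) : α = β := by
  obtain ⟨C, hC⟩ := h
  by_contra hne
  have hpos : 0 < |α - β| := abs_pos.2 (sub_ne_zero.2 hne)
  obtain ⟨n, hn⟩ := exists_nat_gt ((C + 1) / |α - β|)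
  rw [div_lt_iff₀ hpos] at hn
  set d : ℝ := ⌊((n : ℤ) : ℝ) * α⌋ - ⌊((n : ℤ) : ℝ) * β⌋
  have hd : |d| ≤ C := by simp only [d]; exact_mod_cast hC n
  have hgrowth : (n : ℝ) * |α - β| < C + 1 :=
    calc (n : ℝ) * |α - β| = |d - (d - (((n : ℤ) : ℝ) * α - ((n : ℤ) : ℝ) * β))| := by
          rw [sub_sub_cancel, ← mul_sub, abs_mul]; simp
      _ ≤ |d| + |d - (((n : ℤ) : ℝ) * α - ((n : ℤ) : ℝ) * β)| := abs_sub _ _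
      _ < C + 1 := add_lt_add_of_le_of_lt hd (abs_floor_sub_floor_sub_sub_lt_one _ _)
  linarith

theorem bddZCoinv.exists_nsmul_eq (x : bddZCoinv) {n : ℕ} (hn : n ≠ 0) :
    ∃ y : bddZCoinv, n • y = x := by
  obtain ⟨b, rfl⟩ := QuotientAddGroup.mk_surjective x
  obtain ⟨p, hp⟩ := bdiff_surjective b
  set q : ℤ → ℤ := fun k => p k / n
  set r : ℤ → ℤ := fun k => p k % n
  have hpqr : bdiff p = n • bdiff q + bdiff r := by
    rw [← map_nsmul, ← map_add]
    congr 1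
    funext k
    simp [q, r, Int.mul_ediv_add_emod]
  have hr : r ∈ bddZ := ⟨n, fun k => by
    have h0 : (0 : ℤ) < n := by omega
    rw [abs_of_nonneg (Int.emod_nonneg _ h0.ne')]
    exact (Int.emod_lt_of_pos _ h0).le⟩
  have hq : bdiff q ∈ bddZ := by
    refine mem_bddZ_of_nsmul_mem hn ?_
    rw [eq_sub_of_add_eq hpqr.symm, hp]
    exact sub_mem b.2 (bdiff_mem_bddZ hr)
  refine ⟨QuotientAddGroup.mk ⟨bdiff q, hq⟩, ?_⟩
  rw [← QuotientAddGroup.mk_nsmul, QuotientAddGroup.eq_iff_sub_mem]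
  refine (mem_range_sub_shiftHom_iff (f := -r) ?_).2 (neg_mem hr)
  rw [map_neg, AddSubgroup.coe_sub, AddSubgroup.coe_nsmul, ← hp, hpqr]
  abel

theorem bddZCoinv.eq_zero_of_nsmul_eq_zero {x : bddZCoinv} {n : ℕ} (hn : n ≠ 0)
    (hx : n • x = 0) : x = 0 := by
  obtain ⟨b, rfl⟩ := QuotientAddGroup.mk_surjective x
  obtain ⟨p, hp⟩ := bdiff_surjective b
  rw [← QuotientAddGroup.mk_nsmul, QuotientAddGroup.eq_zero_iff] at hx
  rw [QuotientAddGroup.eq_zero_iff, mem_range_sub_shiftHom_iff hp]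
  have hnp : bdiff (n • p) = ↑(n • b) := by rw [map_nsmul, hp, AddSubgroup.coe_nsmul]
  exact mem_bddZ_of_nsmul_mem hn ((mem_range_sub_shiftHom_iff hnp).1 hx)

instance bddZCoinv.instUncountable : Uncountable bddZCoinv := by
  let F : ℝ → bddZCoinv := fun α =>
    QuotientAddGroup.mk ⟨bdiff fun k : ℤ => ⌊k * α⌋, bdiff_floor_mul_mem_bddZ α⟩
  have hF : Function.Injective F := by
    intro α β hαβ
    rw [QuotientAddGroup.eq_iff_sub_mem] at hαβ
    refine eq_of_floor_mul_sub_floor_mul_mem_bddZ ((mem_range_sub_shiftHom_iff ?_).1 hαβ)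
    change bdiff ((fun k : ℤ => ⌊k * α⌋) - fun k : ℤ => ⌊k * β⌋) = _
    rw [map_sub]
    rfl
  exact hF.uncountable

/-- STATEMENT 16: the quotient group `ℓ∞(ℤ,ℤ)_S` is divisible, torsion-free (hence a rational
vector space) and uncountable. -/
theorem stmt16 :
    (∀ x : bddZCoinv, ∀ n : ℕ, 0 < n → ∃ y : bddZCoinv, n • y = x) ∧
    (∀ x : bddZCoinv, ∀ n : ℕ, 0 < n → n • x = 0 → x = 0) ∧
    ¬ Countable bddZCoinv :=
  ⟨fun x _ hn => x.exists_nsmul_eq hn.ne', fun _ _ hn => bddZCoinv.eq_zero_of_nsmul_eq_zero hn.ne',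
    not_countable⟩
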